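/- arXiv:1006.1720 — 6 statements merged into one kernel-verified Lean document; each statement's English description precedes it below -/
import Mathlib

section
/- Let p and p' be families of sets of ordinals with D = ⋃p ∈ p and D' = ⋃p' ∈ p', such that tp(D) = tp(D'), ρ_{D,D'} is the identity on D ∩ D', and p' = {ρ_{D,D'}[X] : X ∈ p}. Set r = p ∪ p' ∪ {D ∪ D'}. Then every member X of r with X ⊊ D satisfies X ∈ p; that is, {X ∈ r : X ⊊ D} ∪ {D} = p, and symmetrically {X ∈ r : X ⊊ D'} ∪ {D'} = p'. -/
open Set

/-- The image of a set of ordinals `W ⊆ X` under an order isomorphism `e : X ≃o Y`. -/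
def ordImage {X Y : Set Ordinal} (e : ↥X ≃o ↥Y) (W : Set Ordinal) : Set Ordinal :=
  {o | ∃ w : ↥X, w.1 ∈ W ∧ (e w).1 = o}

/-- Let `p, p'` be families of sets of ordinals with `D = ⋃ p ∈ p`, `D' = ⋃ p' ∈ p'`
(`D`, `D'` being the `⊆`-largest elements of `p`, `p'` respectively), such that
`tp(D) = tp(D')` (witnessed by the order-preserving bijection `e = ρ_{D,D'}`), `e` is the
identity on `D ∩ D'`, and `p' = {ρ_{D,D'}[X] : X ∈ p}`.  Set `r = p ∪ p' ∪ {D ∪ D'}`.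
Then `{X ∈ r : X ⊊ D} ∪ {D} = p` and `{X ∈ r : X ⊊ D'} ∪ {D'} = p'`. -/
theorem stmt3 (p p' : Set (Set Ordinal)) (D D' : Set Ordinal)
    (hD : D = ⋃₀ p) (hD' : D' = ⋃₀ p') (hDp : D ∈ p) (hD'p : D' ∈ p')
    (hmax : ∀ X ∈ p, X ⊆ D) (hmax' : ∀ X ∈ p', X ⊆ D')
    (e : ↥D ≃o ↥D') (hid : ∀ x : ↥D, x.1 ∈ D' → (e x).1 = x.1)
    (hp' : p' = ordImage e '' p) :
    {X ∈ p ∪ p' ∪ {D ∪ D'} | X ⊂ D} ∪ {D} = p ∧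
    {X ∈ p ∪ p' ∪ {D ∪ D'} | X ⊂ D'} ∪ {D'} = p' := by
  -- if the image of w lands in D (hence in D ∩ D'), it is fixed
  have key : ∀ w : ↥D, (e w).1 ∈ D → (e w).1 = w.1 := by
    intro w hz
    have hz' : (e w).1 ∈ D' := (e w).2
    have h1 : (e ⟨(e w).1, hz⟩).1 = (e w).1 := hid _ hz'
    have h2 : (⟨(e w).1, hz⟩ : ↥D) = w := by
      apply e.injective
      exact Subtype.ext h1
    have := congrArg Subtype.val h2
    simpa using this
  -- identity on subsets of D ∩ D'
  have fix : ∀ X : Set Ordinal, X ⊆ D → X ⊆ D' → ordImage e X = X := by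
    intro X hXD hXD'
    ext z
    constructor
    · rintro ⟨w, hw, rfl⟩
      have := hid w (hXD' hw)
      rwa [this]
    · intro hz
      exact ⟨⟨z, hXD hz⟩, hz, hid _ (hXD' hz)⟩
  -- members of p' strictly inside D belong to p
  have f1 : ∀ X ∈ p', X ⊂ D → X ∈ p := by
    intro X hX hXD
    rw [hp'] at hX
    obtain ⟨Y, hY, rfl⟩ := hX
    have hsub : ordImage e Y ⊆ D := hXD.1
    have : ordImage e Y = Y := by
      ext z
      constructor
      · rintro ⟨w, hw, rfl⟩
        have := key w (hsub ⟨w, hw, rfl⟩)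
        rwa [this]
      · intro hz
        have hzD : z ∈ D := hmax Y hY hz
        have hmem : (e ⟨z, hzD⟩).1 ∈ ordImage e Y := ⟨⟨z, hzD⟩, hz, rfl⟩
        have := key ⟨z, hzD⟩ (hsub hmem)
        rw [this] at hmem
        exact hmem
    rw [this]; exact hY
  -- members of p strictly inside D' belong to p'
  have f2 : ∀ X ∈ p, X ⊂ D' → X ∈ p' := by
    intro X hX hXD'
    have : ordImage e X = X := fix X (hmax X hX) hXD'.1
    rw [hp']
    exact ⟨X, hX, this⟩
  constructor
  · ext X
    simp only [mem_union, mem_setOf_eq, mem_singleton_iff]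
    constructor
    · rintro (⟨(hr | hr) | hr, hs⟩ | rfl)
      · exact hr
      · exact f1 X hr hs
      · exact absurd (by rw [hr]; exact subset_union_left : D ⊆ X) hs.2
      · exact hDp
    · intro hX
      rcases eq_or_ne X D with rfl | hne
      · exact Or.inr rfl
      · exact Or.inl ⟨Or.inl (Or.inl hX), (hmax X hX).ssubset_of_ne hne⟩
  · ext X
    simp only [mem_union, mem_setOf_eq, mem_singleton_iff]
    constructor
    · rintro (⟨(hr | hr) | hr, hs⟩ | rfl)
      · exact f2 X hr hs
      · exact hr
      · exact absurd (by rw [hr]; exact subset_union_right : D' ⊆ X) hs.2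
      · exact hD'p
    · intro hX
      rcases eq_or_ne X D' with rfl | hne
      · exact Or.inr rfl
      · exact Or.inl ⟨Or.inl (Or.inr hX), (hmax' X hX).ssubset_of_ne hne⟩
end

section
/- Let F be a strong (ω₁,λ)-semimorass. If X, Y ∈ F have equal rank in the well-founded partial order ⊊ on F, and α ∈ X ∩ Y ∩ ω₂, then X ∩ α = Y ∩ α. -/
open Set Cardinal

noncomputable section

/-- The ordinal `ω₁`. -/
def omega1O : Ordinal := (Cardinal.aleph 1).ord
/-- The ordinal `ω₂`. -/
def omega2O : Ordinal := (Cardinal.aleph 2).ord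

/-- `F↾X = {Y ∈ F : Y ⊊ X}`. -/
def Frestrict (F : Set (Set Ordinal)) (X : Set Ordinal) : Set (Set Ordinal) :=
  {Y ∈ F | Y ⊂ X}

/-- `X = X₁ ⊕ X₂`: same order type, union, and `ρ_{X₁,X₂}` is the identity on `X₁ ∩ X₂`. -/
def Oplus (X X₁ X₂ : Set Ordinal) : Prop :=
  X = X₁ ∪ X₂ ∧ ∃ e : ↥X₁ ≃o ↥X₂, ∀ x : ↥X₁, x.1 ∈ X₂ → (e x).1 = x.1

/-- `X = X₁ ⊙ X₂`: same order type, union, and `X₁ ∩ X₂ < X₁ \ X₂ < X₂ \ X₁` elementwise. -/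
def Odot (X X₁ X₂ : Set Ordinal) : Prop :=
  X = X₁ ∪ X₂ ∧ Nonempty (↥X₁ ≃o ↥X₂) ∧
  (∀ a ∈ X₁ ∩ X₂, ∀ b ∈ X₁ \ X₂, a < b) ∧
  (∀ a ∈ X₁ ∩ X₂, ∀ c ∈ X₂ \ X₁, a < c) ∧
  (∀ b ∈ X₁ \ X₂, ∀ c ∈ X₂ \ X₁, b < c)

/-- `X = X₁ ⊗ X₂`: `X = X₁ ⊕ X₂` and `X ∩ ω₂ = (X₁ ∩ ω₂) ⊙ (X₂ ∩ ω₂)`. -/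
def Otimes (X X₁ X₂ : Set Ordinal) : Prop :=
  Oplus X X₁ X₂ ∧ Odot (X ∩ Iio omega2O) (X₁ ∩ Iio omega2O) (X₂ ∩ Iio omega2O)

/-- `rk` is the rank function of the well-founded relation `⊊` on `F`. -/
def IsRankFn (F : Set (Set Ordinal)) (rk : Set Ordinal → Ordinal) : Prop :=
  ∀ X ∈ F, rk X = sSup ((fun Y => rk Y + 1) '' Frestrict F X)

/-- `F ⊆ [λ]^ω` is a strong `(ω₁,λ)`-semimorass, with rank function `rk`:
(M1) `(F,⊆)` is well-founded (with rank `rk`); (M2) `F` is locally small;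
(M3) `F` is homogeneous; (M4) `F` is directed; (M5) `F` is strongly locally
semidirected; (M6) `F` covers `λ`. -/
def IsStrongSemimorass (lam : Ordinal) (F : Set (Set Ordinal))
    (rk : Set Ordinal → Ordinal) : Prop :=
  (∀ X ∈ F, X ⊆ Iio lam ∧ X.Countable ∧ X.Infinite) ∧
  WellFounded (fun A B : ↥F => A.1 ⊂ B.1) ∧
  IsRankFn F rk ∧
  (∀ X ∈ F, (Frestrict F X).Countable) ∧
  (∀ X ∈ F, ∀ Y ∈ F, rk X = rk Y →
    ∃ e : ↥X ≃o ↥Y, Frestrict F Y = ordImage e '' Frestrict F X) ∧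
  (∀ X ∈ F, ∀ Y ∈ F, ∃ Z ∈ F, X ∪ Y ⊆ Z) ∧
  (∀ X ∈ F, DirectedOn (· ⊆ ·) (Frestrict F X) ∨
    ∃ X₁ ∈ F, ∃ X₂ ∈ F, rk X₁ = rk X₂ ∧ Otimes X X₁ X₂ ∧
      Frestrict F X = Frestrict F X₁ ∪ Frestrict F X₂ ∪ {X₁, X₂}) ∧
  ⋃₀ F = Iio lam

end

/-!
Fix `α < ω₂` and let `Z ∈ F`; we show by `⊊`-induction on `Z` that any two members of `F`
below `Z` of equal rank containing `α` agree up to `α`. Two such sets `X, Y` of the same rank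
as `Z` both equal `Z`. Otherwise they lie in `F↾Z`: if `F↾Z` is directed they lie below some
smaller member of `F`. If `Z = Z₁ ⊗ Z₂`, the only new case is `X ⊆ Z₁`, `Y ⊆ Z₂`. By
homogeneity `Y = ρ[X']` with `X' ⊆ Z₁` of the same rank. The `⊙` condition forces `Z₁` and
`Z₂` to agree up to `α ∈ Z₁ ∩ Z₂`, where `ρ = ρ_{Z₁,Z₂}` is therefore the identity; so `Y`
and `X'` agree up to `α`, and `X`, `X'` agree up to `α` by induction at `Z₁`.
-/

section ordImage

variable {X Y : Set Ordinal} (e : ↥X ≃o ↥Y)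

lemma ordImage_subset (W : Set Ordinal) : ordImage e W ⊆ Y := by
  rintro o ⟨w, -, rfl⟩
  exact (e w).2

lemma ordImage_self : ordImage e X = Y :=
  (ordImage_subset e X).antisymm fun y hy => ⟨e.symm ⟨y, hy⟩, Subtype.coe_prop _, by simp⟩

lemma ordImage_mono {W W' : Set Ordinal} (h : W ⊆ W') : ordImage e W ⊆ ordImage e W' := by
  rintro o ⟨w, hw, rfl⟩
  exact ⟨w, h hw, rfl⟩

lemma ordImage_subset_ordImage_iff {W W' : Set Ordinal} (hW : W ⊆ X) :
    ordImage e W ⊆ ordImage e W' ↔ W ⊆ W' := by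
  refine ⟨fun h w hw => ?_, ordImage_mono e⟩
  obtain ⟨w', hw', he⟩ := h ⟨⟨w, hW hw⟩, hw, rfl⟩
  obtain rfl := e.injective (Subtype.ext he)
  exact hw'

lemma ordImage_ssubset_ordImage_iff {W W' : Set Ordinal} (hW : W ⊆ X) (hW' : W' ⊆ X) :
    ordImage e W ⊂ ordImage e W' ↔ W ⊂ W' := by
  simp only [ssubset_iff_subset_not_subset, ordImage_subset_ordImage_iff e hW,
    ordImage_subset_ordImage_iff e hW']

lemma ordImage_inter_Iic {α : Ordinal} (hid : ∀ x : ↥X, x.1 ∈ Y → (e x).1 = x.1)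
    (hαX : α ∈ X) (hXY : X ∩ Iic α = Y ∩ Iic α) {W : Set Ordinal} (hW : W ⊆ X) :
    ordImage e W ∩ Iic α = W ∩ Iic α := by
  ext β
  constructor
  · rintro ⟨⟨w, hw, rfl⟩, hwα⟩
    have hαY : α ∈ Y := (hXY.subset ⟨hαX, self_mem_Iic⟩).1
    have hfix : (e ⟨α, hαX⟩).1 = α := hid _ hαY
    have hw_le : w.1 ≤ α := by
      have : e w ≤ e ⟨α, hαX⟩ := by rw [← Subtype.coe_le_coe, hfix]; exact hwα
      exact Subtype.coe_le_coe.2 (e.le_iff_le.1 this)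
    have hwY : w.1 ∈ Y := (hXY.subset ⟨w.2, hw_le⟩).1
    rw [hid w hwY]
    exact ⟨hw, hw_le⟩
  · rintro ⟨hβW, hβα⟩
    have hβY : β ∈ Y := (hXY.subset ⟨hW hβW, hβα⟩).1
    exact ⟨⟨⟨β, hW hβW⟩, hβW, hid _ hβY⟩, hβα⟩

end ordImage

lemma Odot.inter_Iic_eq {X X₁ X₂ : Set Ordinal} (h : Odot X X₁ X₂) {α : Ordinal}
    (hα₁ : α ∈ X₁) (hα₂ : α ∈ X₂) : X₁ ∩ Iic α = X₂ ∩ Iic α := by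
  obtain ⟨-, -, h₁, h₂, -⟩ := h
  ext β
  constructor
  · rintro ⟨hβ, hβα⟩
    by_contra hβ₂
    exact (h₁ α ⟨hα₁, hα₂⟩ β ⟨hβ, fun hβ' => hβ₂ ⟨hβ', hβα⟩⟩).not_ge hβα
  · rintro ⟨hβ, hβα⟩
    by_contra hβ₁
    exact (h₂ α ⟨hα₁, hα₂⟩ β ⟨hβ, fun hβ' => hβ₁ ⟨hβ', hβα⟩⟩).not_ge hβα

lemma Otimes.inter_Iic_eq {X X₁ X₂ : Set Ordinal} (h : Otimes X X₁ X₂) {α : Ordinal}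
    (hα : α < omega2O) (hα₁ : α ∈ X₁) (hα₂ : α ∈ X₂) : X₁ ∩ Iic α = X₂ ∩ Iic α := by
  have hIic : Iio omega2O ∩ Iic α = Iic α := inter_eq_right.2 (Iic_subset_Iio.2 hα)
  have := h.2.inter_Iic_eq ⟨hα₁, hα⟩ ⟨hα₂, hα⟩
  rwa [inter_assoc, inter_assoc, hIic] at this

namespace IsRankFn

variable {F : Set (Set Ordinal)} {rk : Set Ordinal → Ordinal}

lemma lt_of_ssubset (hrk : IsRankFn F rk) (hcnt : ∀ X ∈ F, (Frestrict F X).Countable)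
    {X Z : Set Ordinal} (hX : X ∈ F) (hZ : Z ∈ F) (h : X ⊂ Z) : rk X < rk Z := by
  have : Countable ((fun Y => rk Y + 1) '' Frestrict F Z) := ((hcnt Z hZ).image _).to_subtype
  calc rk X < rk X + 1 := Order.lt_add_one_iff.2 le_rfl
    _ ≤ rk Z := hrk Z hZ ▸ le_csSup Ordinal.bddAbove_of_small ⟨X, ⟨hX, h⟩, rfl⟩

lemma eq_of_subset_of_rk_eq (hrk : IsRankFn F rk) (hcnt : ∀ X ∈ F, (Frestrict F X).Countable)
    {X Z : Set Ordinal} (hX : X ∈ F) (hZ : Z ∈ F) (h : X ⊆ Z) (hXZ : rk X = rk Z) : X = Z := by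
  by_contra hne
  exact (hrk.lt_of_ssubset hcnt hX hZ (ssubset_iff_subset_ne.2 ⟨h, hne⟩)).ne hXZ

lemma rk_ordImage (hrk : IsRankFn F rk) (hwf : WellFounded (fun A B : ↥F => A.1 ⊂ B.1))
    {Z₁ Z₂ : Set Ordinal} (e : ↥Z₁ ≃o ↥Z₂)
    (him : Frestrict F Z₂ = ordImage e '' Frestrict F Z₁) :
    ∀ W ∈ Frestrict F Z₁, rk (ordImage e W) = rk W := by
  suffices ∀ W : ↥F, W.1 ∈ Frestrict F Z₁ → rk (ordImage e W.1) = rk W.1 from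
    fun W hW => this ⟨W, hW.1⟩ hW
  intro W
  induction W using hwf.induction with
  | _ W IH =>
    intro hW
    have hWZ₁ : W.1 ⊆ Z₁ := hW.2.1
    have heW : ordImage e W.1 ∈ Frestrict F Z₂ := him ▸ ⟨W.1, hW, rfl⟩
    have hsub : ∀ {V}, V ∈ Frestrict F W.1 → V ∈ Frestrict F Z₁ :=
      fun hV => ⟨hV.1, hV.2.trans hW.2⟩
    have hres : Frestrict F (ordImage e W.1) = ordImage e '' Frestrict F W.1 := by
      ext V
      constructor
      · rintro ⟨hVF, hVW⟩
        have hVZ₂ : V ∈ Frestrict F Z₂ := ⟨hVF, hVW.trans_subset (ordImage_subset e _)⟩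
        rw [him] at hVZ₂
        obtain ⟨V', hV', rfl⟩ := hVZ₂
        exact ⟨V', ⟨hV'.1, (ordImage_ssubset_ordImage_iff e hV'.2.1 hWZ₁).1 hVW⟩, rfl⟩
      · rintro ⟨V', hV', rfl⟩
        have hV'F : ordImage e V' ∈ F := (him ▸ ⟨V', hsub hV', rfl⟩ : _ ∈ Frestrict F Z₂).1
        exact ⟨hV'F, (ordImage_ssubset_ordImage_iff e (hsub hV').2.1 hWZ₁).2 hV'.2⟩
    rw [hrk _ heW.1, hres, image_image, hrk W.1 W.2]
    exact congrArg sSup (image_congr fun V hV => by rw [IH ⟨V, hV.1⟩ hV.2 (hsub hV)])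

end IsRankFn

def CoherentBelow (F : Set (Set Ordinal)) (rk : Set Ordinal → Ordinal) (α : Ordinal)
    (Z : Set Ordinal) : Prop :=
  ∀ X ∈ F, ∀ Y ∈ F, X ⊆ Z → Y ⊆ Z → rk X = rk Y → α ∈ X → α ∈ Y → X ∩ Iic α = Y ∩ Iic α

namespace IsStrongSemimorass

variable {lam : Ordinal} {F : Set (Set Ordinal)} {rk : Set Ordinal → Ordinal}

lemma exists_ordImage_eq (hF : IsStrongSemimorass lam F rk) {Z₁ Z₂ : Set Ordinal}
    (e : ↥Z₁ ≃o ↥Z₂) (him : Frestrict F Z₂ = ordImage e '' Frestrict F Z₁)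
    (hZ₁ : Z₁ ∈ F) (hZ₁₂ : rk Z₁ = rk Z₂) {Y : Set Ordinal} (hY : Y ∈ F) (hYZ₂ : Y ⊆ Z₂) :
    ∃ X ∈ F, X ⊆ Z₁ ∧ rk X = rk Y ∧ ordImage e X = Y := by
  rcases hYZ₂.eq_or_ssubset with rfl | hYZ₂
  · exact ⟨Z₁, hZ₁, subset_rfl, hZ₁₂, ordImage_self e⟩
  · obtain ⟨-, hwf, hrk, -⟩ := hF
    have hYr : Y ∈ Frestrict F Z₂ := ⟨hY, hYZ₂⟩
    rw [him] at hYr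
    obtain ⟨X, hX, rfl⟩ := hYr
    exact ⟨X, hX.1, hX.2.1, (hrk.rk_ordImage hwf e him X hX).symm, rfl⟩

lemma coherentBelow_of_otimes (hF : IsStrongSemimorass lam F rk) {α : Ordinal}
    (hα : α < omega2O) {Z Z₁ Z₂ : Set Ordinal} (hZ₁ : Z₁ ∈ F) (hZ₂ : Z₂ ∈ F)
    (hZ₁₂ : rk Z₁ = rk Z₂) (hZ : Otimes Z Z₁ Z₂) (hcoh : CoherentBelow F rk α Z₁)
    {X Y : Set Ordinal} (hX : X ∈ F) (hY : Y ∈ F) (hXZ₁ : X ⊆ Z₁) (hYZ₂ : Y ⊆ Z₂)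
    (hXY : rk X = rk Y) (hαX : α ∈ X) (hαY : α ∈ Y) : X ∩ Iic α = Y ∩ Iic α := by
  obtain ⟨-, e, hid⟩ := hZ.1
  obtain ⟨-, -, -, -, hhom, -⟩ := id hF
  obtain ⟨e', him⟩ := hhom Z₁ hZ₁ Z₂ hZ₂ hZ₁₂
  rw [Subsingleton.elim e' e] at him
  obtain ⟨X', hX', hX'Z₁, hX'Y, rfl⟩ := hF.exists_ordImage_eq e him hZ₁ hZ₁₂ hY hYZ₂
  have hZ₁₂α := hZ.inter_Iic_eq hα (hXZ₁ hαX) (hYZ₂ hαY)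
  have hYX' : ordImage e X' ∩ Iic α = X' ∩ Iic α :=
    ordImage_inter_Iic e hid (hXZ₁ hαX) hZ₁₂α hX'Z₁
  have hαX' : α ∈ X' := (hYX'.subset ⟨hαY, self_mem_Iic⟩).1
  rw [hYX']
  exact hcoh X hX X' hX' hXZ₁ hX'Z₁ (hXY.trans hX'Y.symm) hαX hαX'

lemma coherentBelow_of_ssubset (hF : IsStrongSemimorass lam F rk) {α : Ordinal}
    (hα : α < omega2O) {Z : Set Ordinal} (hZ : Z ∈ F)
    (IH : ∀ Z' ∈ F, Z' ⊂ Z → CoherentBelow F rk α Z') : CoherentBelow F rk α Z := by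
  obtain ⟨-, -, hrk, hcnt, -, -, hM5, -⟩ := id hF
  intro X hX Y hY hXZ hYZ hXY hαX hαY
  rcases hXZ.eq_or_ssubset with rfl | hXZ
  · rw [hrk.eq_of_subset_of_rk_eq hcnt hY hX hYZ hXY.symm]
  rcases hYZ.eq_or_ssubset with rfl | hYZ
  · rw [hrk.eq_of_subset_of_rk_eq hcnt hX hY hXZ.1 hXY]
  rcases hM5 Z hZ with hdir | ⟨Z₁, hZ₁, Z₂, hZ₂, hZ₁₂, hZsplit, hres⟩
  · obtain ⟨W, hW, hXW, hYW⟩ := hdir X ⟨hX, hXZ⟩ Y ⟨hY, hYZ⟩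
    exact IH W hW.1 hW.2 X hX Y hY hXW hYW hXY hαX hαY
  have hsplit : ∀ V ∈ Frestrict F Z, V ⊆ Z₁ ∨ V ⊆ Z₂ := by
    rw [hres]
    rintro V ((hV | hV) | rfl | rfl)
    exacts [Or.inl hV.2.1, Or.inr hV.2.1, Or.inl subset_rfl, Or.inr subset_rfl]
  have hZ₁Z : Z₁ ⊂ Z := (hres ▸ Or.inr (mem_insert _ _) : Z₁ ∈ Frestrict F Z).2
  have hZ₂Z : Z₂ ⊂ Z := (hres ▸ Or.inr (mem_insert_of_mem _ rfl) : Z₂ ∈ Frestrict F Z).2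
  rcases hsplit X ⟨hX, hXZ⟩ with hX₁ | hX₂ <;> rcases hsplit Y ⟨hY, hYZ⟩ with hY₁ | hY₂
  · exact IH Z₁ hZ₁ hZ₁Z X hX Y hY hX₁ hY₁ hXY hαX hαY
  · exact hF.coherentBelow_of_otimes hα hZ₁ hZ₂ hZ₁₂ hZsplit (IH Z₁ hZ₁ hZ₁Z)
      hX hY hX₁ hY₂ hXY hαX hαY
  · exact (hF.coherentBelow_of_otimes hα hZ₁ hZ₂ hZ₁₂ hZsplit (IH Z₁ hZ₁ hZ₁Z)
      hY hX hY₁ hX₂ hXY.symm hαY hαX).symm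
  · exact IH Z₂ hZ₂ hZ₂Z X hX Y hY hX₂ hY₂ hXY hαX hαY

lemma coherentBelow (hF : IsStrongSemimorass lam F rk) {α : Ordinal} (hα : α < omega2O)
    {Z : Set Ordinal} (hZ : Z ∈ F) : CoherentBelow F rk α Z := by
  suffices ∀ Z : ↥F, CoherentBelow F rk α Z.1 from this ⟨Z, hZ⟩
  intro Z
  induction Z using hF.2.1.induction with
  | _ Z IH => exact hF.coherentBelow_of_ssubset hα Z.2 fun Z' hZ' h => IH ⟨Z', hZ'⟩ h

end IsStrongSemimorass

theorem stmt4_general (lam : Cardinal)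
    (F : Set (Set Ordinal)) (rk : Set Ordinal → Ordinal)
    (hF : IsStrongSemimorass lam.ord F rk) :
    ∀ X ∈ F, ∀ Y ∈ F, rk X = rk Y → ∀ α : Ordinal, α < omega2O → α ∈ X → α ∈ Y →
      X ∩ Set.Iio α = Y ∩ Set.Iio α := by
  intro X hX Y hY hXY α hα hαX hαY
  obtain ⟨-, -, -, -, -, hdir, -⟩ := id hF
  obtain ⟨Z, hZ, hXYZ⟩ := hdir X hX Y hY
  have hle : X ∩ Iic α = Y ∩ Iic α :=
    hF.coherentBelow hα hZ X hX Y hY (subset_union_left.trans hXYZ)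
      (subset_union_right.trans hXYZ) hXY hαX hαY
  simpa only [inter_assoc, inter_eq_right.2 Iio_subset_Iic_self] using congrArg (· ∩ Iio α) hle

/-- Let `F` be a strong `(ω₁,λ)`-semimorass. If `X, Y ∈ F` have equal rank and
`α ∈ X ∩ Y ∩ ω₂`, then `X ∩ α = Y ∩ α`. -/
theorem stmt4 (lam : Cardinal) (hlam : Cardinal.aleph 1 ≤ lam)
    (F : Set (Set Ordinal)) (rk : Set Ordinal → Ordinal)
    (hF : IsStrongSemimorass lam.ord F rk) :
    ∀ X ∈ F, ∀ Y ∈ F, rk X = rk Y → ∀ α : Ordinal, α < omega2O → α ∈ X → α ∈ Y →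
      X ∩ Set.Iio α = Y ∩ Set.Iio α :=
  stmt4_general lam F rk hF
end

section
/- Let F be a strong (ω₁,λ)-semimorass. If X, Y ∈ F with X ⊆ Y and rank(X) < α < rank(Y), then there exists Z ∈ F with rank(Z) = α and X ⊆ Z ⊆ Y. -/
open Set Cardinal

/-! Strong induction on `rk Y`. Every `X ∈ F↾Y` lies below some `Y' ∈ F↾Y` of rank at least
`α`: in the directed case take an upper bound of `X` and a member of `F↾Y` of rank `≥ α` (which
exists because `rk Y` is the supremum of `rk W + 1` over `F↾Y`); in the split case `Y = Y₁ ⊗ Y₂`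
every member of `F↾Y` has rank at most `rk Y₁ = rk Y₂`, and `X` lies below `Y₁` or `Y₂`. Then
either `rk Y' = α`, or `α < rk Y' < rk Y` and the induction hypothesis applies to `Y'`. -/

namespace IsRankFn

variable {F : Set (Set Ordinal)} {rk : Set Ordinal → Ordinal}

theorem lt_of_ssubset_s5 (hrk : IsRankFn F rk) {A B : Set Ordinal} (hA : A ∈ F) (hB : B ∈ F)
    (hB_cnt : (Frestrict F B).Countable) (hAB : A ⊂ B) : rk A < rk B := by
  have := (hB_cnt.image fun Y => rk Y + 1).to_subtype
  rw [hrk B hB, ← Order.add_one_le_iff]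
  exact le_csSup Ordinal.bddAbove_of_small ⟨A, ⟨hA, hAB⟩, rfl⟩

theorem le_of_subset (hrk : IsRankFn F rk) {A B : Set Ordinal} (hA : A ∈ F) (hB : B ∈ F)
    (hB_cnt : (Frestrict F B).Countable) (hAB : A ⊆ B) : rk A ≤ rk B := by
  rcases hAB.eq_or_ssubset with rfl | hAB
  · rfl
  · exact (hrk.lt_of_ssubset_s5 hA hB hB_cnt hAB).le

theorem exists_mem_frestrict_le (hrk : IsRankFn F rk) {Y : Set Ordinal} (hY : Y ∈ F)
    {α : Ordinal} (hα : α < rk Y) : ∃ W ∈ Frestrict F Y, α ≤ rk W := by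
  rw [hrk Y hY] at hα
  obtain ⟨_, ⟨W, hW, rfl⟩, hαW⟩ := exists_lt_of_lt_csSup' hα
  exact ⟨W, hW, Order.lt_add_one_iff.mp hαW⟩

theorem exists_rank_eq_between (hrk : IsRankFn F rk)
    (hcnt : ∀ X ∈ F, (Frestrict F X).Countable)
    (hcof : ∀ Y ∈ F, ∀ X ∈ Frestrict F Y, ∀ W ∈ Frestrict F Y,
      ∃ Y' ∈ Frestrict F Y, X ⊆ Y' ∧ rk W ≤ rk Y')
    {X Y : Set Ordinal} (hX : X ∈ F) (hY : Y ∈ F) (hXY : X ⊆ Y) {α : Ordinal}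
    (hXα : rk X < α) (hαY : α < rk Y) : ∃ Z ∈ F, rk Z = α ∧ X ⊆ Z ∧ Z ⊆ Y := by
  induction hβ : rk Y using WellFoundedLT.induction generalizing Y with
  | _ β ih =>
    subst hβ
    have hX_lt : X ∈ Frestrict F Y :=
      ⟨hX, hXY.ssubset_of_ne (by rintro rfl; exact (hXα.trans hαY).false)⟩
    obtain ⟨W, hW, hαW⟩ := hrk.exists_mem_frestrict_le hY hαY
    obtain ⟨Y', ⟨hY', hY'Y⟩, hXY', hWY'⟩ := hcof Y hY X hX_lt W hW
    rcases (hαW.trans hWY').eq_or_lt with hα | hα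
    · exact ⟨Y', hY', hα.symm, hXY', hY'Y.subset⟩
    · obtain ⟨Z, hZ, hZα, hXZ, hZY'⟩ :=
        ih _ (hrk.lt_of_ssubset_s5 hY' hY (hcnt Y hY) hY'Y) hY' hXY' hα rfl
      exact ⟨Z, hZ, hZα, hXZ, hZY'.trans hY'Y.subset⟩

theorem exists_superset_rank_ge_of_directedOn (hrk : IsRankFn F rk)
    (hcnt : ∀ X ∈ F, (Frestrict F X).Countable) {Y : Set Ordinal}
    (hdir : DirectedOn (· ⊆ ·) (Frestrict F Y)) {X W : Set Ordinal} (hX : X ∈ Frestrict F Y)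
    (hW : W ∈ Frestrict F Y) : ∃ Y' ∈ Frestrict F Y, X ⊆ Y' ∧ rk W ≤ rk Y' := by
  obtain ⟨Y', hY', hXY', hWY'⟩ := hdir X hX W hW
  exact ⟨Y', hY', hXY', hrk.le_of_subset hW.1 hY'.1 (hcnt _ hY'.1) hWY'⟩

theorem exists_superset_rank_ge_of_frestrict_eq (hrk : IsRankFn F rk)
    (hcnt : ∀ X ∈ F, (Frestrict F X).Countable) {Y Y₁ Y₂ : Set Ordinal} (hY₁ : Y₁ ∈ F)
    (hY₂ : Y₂ ∈ F) (hrk₁₂ : rk Y₁ = rk Y₂)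
    (hsplit : Frestrict F Y = Frestrict F Y₁ ∪ Frestrict F Y₂ ∪ {Y₁, Y₂})
    {X W : Set Ordinal} (hX : X ∈ Frestrict F Y) (hW : W ∈ Frestrict F Y) :
    ∃ Y' ∈ Frestrict F Y, X ⊆ Y' ∧ rk W ≤ rk Y' := by
  have hY₁Y : Y₁ ∈ Frestrict F Y := by simp [hsplit]
  have hY₂Y : Y₂ ∈ Frestrict F Y := by simp [hsplit]
  have below_split : ∀ V ∈ Frestrict F Y, V ⊆ Y₁ ∨ V ⊆ Y₂ := by
    intro V hV
    rw [hsplit] at hV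
    rcases hV with (hV | hV) | rfl | rfl
    exacts [.inl hV.2.subset, .inr hV.2.subset, .inl subset_rfl, .inr subset_rfl]
  have hW_le : rk W ≤ rk Y₁ := by
    rcases below_split W hW with hWY | hWY
    · exact hrk.le_of_subset hW.1 hY₁ (hcnt _ hY₁) hWY
    · exact hrk₁₂ ▸ hrk.le_of_subset hW.1 hY₂ (hcnt _ hY₂) hWY
  rcases below_split X hX with hXY | hXY
  · exact ⟨Y₁, hY₁Y, hXY, hW_le⟩
  · exact ⟨Y₂, hY₂Y, hXY, hrk₁₂ ▸ hW_le⟩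

end IsRankFn

theorem stmt5_general (lam : Cardinal)
    (F : Set (Set Ordinal)) (rk : Set Ordinal → Ordinal)
    (hF : IsStrongSemimorass lam.ord F rk) :
    ∀ X ∈ F, ∀ Y ∈ F, X ⊆ Y → ∀ α : Ordinal, rk X < α → α < rk Y →
      ∃ Z ∈ F, rk Z = α ∧ X ⊆ Z ∧ Z ⊆ Y := by
  obtain ⟨-, -, hrk, hcnt, -, -, hloc, -⟩ := hF
  intro X hX Y hY hXY α hXα hαY
  refine hrk.exists_rank_eq_between hcnt ?_ hX hY hXY hXα hαY
  intro Y hY X hX W hW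
  rcases hloc Y hY with hdir | ⟨Y₁, hY₁, Y₂, hY₂, hrk₁₂, -, hsplit⟩
  · exact hrk.exists_superset_rank_ge_of_directedOn hcnt hdir hX hW
  · exact hrk.exists_superset_rank_ge_of_frestrict_eq hcnt hY₁ hY₂ hrk₁₂ hsplit hX hW

/-- Let `F` be a strong `(ω₁,λ)`-semimorass. If `X, Y ∈ F` with `X ⊆ Y` and
`rank X < α < rank Y`, then there is `Z ∈ F` with `rank Z = α` and `X ⊆ Z ⊆ Y`. -/
theorem stmt5 (lam : Cardinal) (hlam : Cardinal.aleph 1 ≤ lam)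
    (F : Set (Set Ordinal)) (rk : Set Ordinal → Ordinal)
    (hF : IsStrongSemimorass lam.ord F rk) :
    ∀ X ∈ F, ∀ Y ∈ F, X ⊆ Y → ∀ α : Ordinal, rk X < α → α < rk Y →
      ∃ Z ∈ F, rk Z = α ∧ X ⊆ Z ∧ Z ⊆ Y :=
  stmt5_general lam F rk hF
end

section
/- Let F ⊆ [λ]^ω, let c : F → λ be an injective function, and suppose X₀ ∈ F satisfies: c(X*) ∈ X₀ for every X* ∈ F with X* ⊊ X₀. Suppose M is a countable elementary submodel of H(θ) with F, c ∈ M and M ∩ λ = X₀. Then every X ∈ F with X ⊊ M ∩ λ satisfies X ∈ M. -/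
open FirstOrder

/-- The first-order language of set theory: a single binary relation symbol. -/
def setLang : FirstOrder.Language :=
  ⟨fun _ => Empty, fun n => match n with | 2 => Unit | _ => Empty⟩

/-- The universe of ZF sets as a `setLang`-structure, interpreting the binary relation
symbol by genuine membership `∈`. -/
instance : setLang.Structure ZFSet where
  funMap {n} f _ := Empty.elim f
  RelMap {n} :=
    match n with
    | 0 => fun r _ => Empty.elim r
    | 1 => fun r _ => Empty.elim r
    | 2 => fun _ x => x 0 ∈ x 1
    | _ + 3 => fun r _ => Empty.elim r

/-- `x` is a (von Neumann) ordinal: a transitive set of transitive sets. -/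
def ZFIsOrd (x : ZFSet) : Prop := x.IsTransitive ∧ ∀ y ∈ x, ZFSet.IsTransitive y

/-!
Since `X ⊊ X₀`, the value `c(X)` lies in `X₀ = M ∩ λ ⊆ M`. By injectivity of `c`, `X` is the only
set whose pair with `c(X)` belongs to `c`, so `{X}` is definable from the parameters `c, c(X) ∈ M`;
an elementary submodel meets every nonempty set definable over it, hence contains `X`.
-/

namespace FirstOrder.Language.ElementarySubstructure

theorem mem_of_definable₁_singleton {L : Language} {N : Type*} [L.Structure N]
    (S : L.ElementarySubstructure N) {x : N} (hx : (S : Set N).Definable₁ L {x}) : x ∈ S :=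
  Set.singleton_inter_nonempty.mp (S.meetsDefinable _ (Set.singleton_nonempty x) hx)

end FirstOrder.Language.ElementarySubstructure

namespace ZFSet

open FirstOrder.Language Set

def memFormula {α : Type*} (t u : setLang.Term α) : setLang.Formula α :=
  Relations.formula₂ (() : setLang.Relations 2) t u

@[simp]
theorem realize_memFormula {α : Type*} (t u : setLang.Term α) (v : α → ZFSet) :
    (memFormula t u).Realize v ↔ t.realize v ∈ u.realize v :=
  Formula.realize_rel₂

theorem definable_mem (A : Set ZFSet) : A.Definable setLang {v : Fin 2 → ZFSet | v 0 ∈ v 1} :=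
  (empty_definable_iff.mpr ⟨memFormula (Term.var 0) (Term.var 1), by ext; simp⟩).mono
    (Set.empty_subset A)

theorem definableFun_insert_singleton :
    (∅ : Set ZFSet).DefinableFun setLang (fun v : Fin 2 → ZFSet => ({v 0, v 1} : ZFSet)) := by
  rw [empty_definableFun_iff]
  refine ⟨Formula.iAlls Unit ((memFormula (Term.var (Sum.inr ())) (Term.var (Sum.inl none))).iff
    ((Term.var (Sum.inr ())).equal (Term.var (Sum.inl (some 0))) ⊔
      (Term.var (Sum.inr ())).equal (Term.var (Sum.inl (some 1))))), ?_⟩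
  ext w
  simp only [Function.tupleGraph, Set.mem_ofPred_eq, Formula.realize_iAlls, Formula.realize_iff,
    realize_memFormula, Formula.realize_sup, Formula.realize_equal, Term.realize_var,
    Sum.elim_inl, Sum.elim_inr, ZFSet.ext_iff, mem_insert_iff, mem_singleton]
  exact ⟨fun h i => (h (i ())).symm, fun h z => (h fun _ => z).symm⟩

theorem definableFun_pair :
    (∅ : Set ZFSet).DefinableFun setLang (fun v : Fin 2 → ZFSet => pair (v 0) (v 1)) := by
  have hupair (i j : Fin 2) : (∅ : Set ZFSet).DefinableFun setLang
      (fun v : Fin 2 → ZFSet => ({v i, v j} : ZFSet)) :=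
    definableFun_insert_singleton.comp (g := fun v => ![v i, v j])
      (fun k => by fin_cases k <;> exact DefinableFun.proj setLang)
  have hg : (∅ : Set ZFSet).DefinableMap setLang
      (fun v : Fin 2 → ZFSet => ![({v 0, v 0} : ZFSet), {v 0, v 1}]) := by
    intro k
    fin_cases k
    exacts [hupair 0 0, hupair 0 1]
  simpa [pair, pair_eq_singleton] using definableFun_insert_singleton.comp hg

theorem definable₁_setOf_pair_mem {A : Set ZFSet} {y c : ZFSet} (hy : y ∈ A) (hc : c ∈ A) :
    A.Definable₁ setLang {x | pair x y ∈ c} := by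
  have hF : A.DefinableMap setLang (fun x : Fin 1 → ZFSet => ![pair (x 0) y, c]) := by
    intro k
    fin_cases k
    · exact (definableFun_pair.mono (Set.empty_subset A)).comp (g := fun x => ![x 0, y])
        (fun k => by fin_cases k; exacts [DefinableFun.proj setLang, definableFun_const setLang _ hy])
    · exact definableFun_const setLang _ hc
  exact (definable_mem A).preimage_map hF

end ZFSet

theorem stmt8_general (lam : ZFSet)
    (F : ZFSet)
    (c : ZFSet) (hc : ZFSet.IsFunc F lam c)
    (hcinj : ∀ X X' y : ZFSet, ZFSet.pair X y ∈ c → ZFSet.pair X' y ∈ c → X = X')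
    (X₀ : ZFSet)
    (hX₀ : ∀ Xs ∈ F, Xs.toSet ⊂ X₀.toSet → ∀ y, ZFSet.pair Xs y ∈ c → y ∈ X₀)
    (M : setLang.ElementarySubstructure ZFSet)
    (hcM : c ∈ M)
    (hMlam : X₀.toSet = {x | x ∈ M ∧ x ∈ lam}) :
    ∀ X ∈ F, X.toSet ⊂ X₀.toSet → X ∈ M := by
  intro X hXF hXX₀
  obtain ⟨y, hXy, -⟩ := hc.2 X hXF
  have hyM : y ∈ M := (hMlam.subset (hX₀ X hXF hXX₀ y hXy)).1
  have hfiber : {x | ZFSet.pair x y ∈ c} = {X} :=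
    Set.ext fun x => ⟨fun hxy => hcinj x X y hxy hXy, fun hx => hx ▸ hXy⟩
  exact M.mem_of_definable₁_singleton (hfiber ▸ ZFSet.definable₁_setOf_pair_mem hyM hcM)

/-- Let `F ⊆ [λ]^ω`, let `c : F → λ` be an injective function (all coded as ZF sets),
and suppose `X₀ ∈ F` satisfies `c(X*) ∈ X₀` for every `X* ∈ F` with `X* ⊊ X₀`.
Suppose `M` is a countable elementary submodel of the set-theoretic universe (playing
the role of `H(θ)` for a large enough regular `θ`) with `F, c ∈ M` and `M ∩ λ = X₀`.
Then every `X ∈ F` with `X ⊊ M ∩ λ` satisfies `X ∈ M`. -/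
theorem stmt8 (lam : ZFSet) (hlam : ZFIsOrd lam)
    (F : ZFSet)
    (hF : ∀ X ∈ F, X.toSet ⊆ lam.toSet ∧ X.toSet.Countable ∧ X.toSet.Infinite)
    (c : ZFSet) (hc : ZFSet.IsFunc F lam c)
    (hcinj : ∀ X X' y : ZFSet, ZFSet.pair X y ∈ c → ZFSet.pair X' y ∈ c → X = X')
    (X₀ : ZFSet) (hX₀F : X₀ ∈ F)
    (hX₀ : ∀ Xs ∈ F, Xs.toSet ⊂ X₀.toSet → ∀ y, ZFSet.pair Xs y ∈ c → y ∈ X₀)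
    (M : setLang.ElementarySubstructure ZFSet)
    (hMcnt : (M : Set ZFSet).Countable)
    (hFM : F ∈ M) (hcM : c ∈ M)
    (hMlam : X₀.toSet = {x | x ∈ M ∧ x ∈ lam}) :
    ∀ X ∈ F, X.toSet ⊂ X₀.toSet → X ∈ M :=
  stmt8_general lam F c hc hcinj X₀ hX₀ M hcM hMlam
end

section
/- Let F be a strong (ω₁,λ)-semimorass and M ≺ H(θ) countable with F ∈ M, M ∩ λ ∈ F, and such that every X ∈ F with X ⊊ M ∩ λ belongs to M. Then rank(M ∩ λ) = M ∩ ω₁ (where rank is computed in the well-founded order ⊊ on F). -/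
open FirstOrder

/-- The (unique, since `∈` well-orders sets of ordinals) `∈`-order isomorphism between
the ZF sets `X` and `Y`, witnessing `tp(X) = tp(Y)`. -/
abbrev zfOrdIso (X Y : ZFSet) :=
  (fun a b : X.toSet => a.1 ∈ b.1) ≃r (fun a b : Y.toSet => a.1 ∈ b.1)

/-- The pointwise image `ρ[W]` of `W ⊆ X` under an isomorphism `e = ρ_{X,Y}`. -/
def zfImage {X Y : ZFSet} (e : zfOrdIso X Y) (W : ZFSet) : Set ZFSet :=
  {o | ∃ w : X.toSet, w.1 ∈ W ∧ (e w).1 = o}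

/-- `F↾X = {Y ∈ F : Y ⊊ X}`. -/
def zfFrestrict (F X : ZFSet) : Set ZFSet := {Y | Y ∈ F ∧ Y.toSet ⊂ X.toSet}

/-- `X = X₁ ⊕ X₂`: same order type, union, and `ρ_{X₁,X₂}` is the identity on `X₁ ∩ X₂`. -/
def zfOplus (X X₁ X₂ : ZFSet) : Prop :=
  X.toSet = X₁.toSet ∪ X₂.toSet ∧
    ∃ e : zfOrdIso X₁ X₂, ∀ w : X₁.toSet, w.1 ∈ X₂ → (e w).1 = w.1

/-- `tp(A) = tp(B)` for sets of ZF-ordinals, via an `∈`-isomorphism. -/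
def zfSameType (A B : Set ZFSet) : Prop :=
  Nonempty ((fun a b : A => a.1 ∈ b.1) ≃r (fun a b : B => a.1 ∈ b.1))

/-- `A = A₁ ⊙ A₂`: same order type, union, and `A₁ ∩ A₂ < A₁ \ A₂ < A₂ \ A₁`
elementwise (`<` being `∈` on ordinals). -/
def zfOdot (A A₁ A₂ : Set ZFSet) : Prop :=
  A = A₁ ∪ A₂ ∧ zfSameType A₁ A₂ ∧
  (∀ a ∈ A₁ ∩ A₂, ∀ b ∈ A₁ \ A₂, a ∈ b) ∧
  (∀ a ∈ A₁ ∩ A₂, ∀ c ∈ A₂ \ A₁, a ∈ c) ∧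
  (∀ b ∈ A₁ \ A₂, ∀ c ∈ A₂ \ A₁, b ∈ c)

/-- `X = X₁ ⊗ X₂`: `X = X₁ ⊕ X₂` and `X ∩ ω₂ = (X₁ ∩ ω₂) ⊙ (X₂ ∩ ω₂)`. -/
def zfOtimes (om2 X X₁ X₂ : ZFSet) : Prop :=
  zfOplus X X₁ X₂ ∧
    zfOdot (X.toSet ∩ om2.toSet) (X₁.toSet ∩ om2.toSet) (X₂.toSet ∩ om2.toSet)

/-- `F` is a strong `(ω₁,λ)`-semimorass (ZF-coded), with ZF-ordinal-valued rank
function `rk` for the well-founded relation `⊊` on `F`: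
(M1) well-foundedness (`rk` satisfying `rk X = sup{rk Y + 1 : Y ∈ F↾X}`);
(M2) local smallness; (M3) homogeneity; (M4) directedness;
(M5) strong local semidirectedness; (M6) `⋃ F = λ`; and `F ⊆ [λ]^ω`. -/
def zfIsStrongSemimorass (lam om2 F : ZFSet) (rk : ZFSet → ZFSet) : Prop :=
  (∀ X ∈ F, X.toSet ⊆ lam.toSet ∧ X.toSet.Countable ∧ X.toSet.Infinite) ∧
  WellFounded (fun A B : {x : ZFSet // x ∈ F} => A.1.toSet ⊂ B.1.toSet) ∧
  (∀ X ∈ F, ∀ b : ZFSet,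
      b ∈ rk X ↔ ∃ Y ∈ F, Y.toSet ⊂ X.toSet ∧ (b ∈ rk Y ∨ b = rk Y)) ∧
  (∀ X ∈ F, (zfFrestrict F X).Countable) ∧
  (∀ X ∈ F, ∀ Y ∈ F, rk X = rk Y → ∃ e : zfOrdIso X Y,
      zfFrestrict F Y = {Z | ∃ W ∈ zfFrestrict F X, Z.toSet = zfImage e W}) ∧
  (∀ X ∈ F, ∀ Y ∈ F, ∃ Z ∈ F, X.toSet ∪ Y.toSet ⊆ Z.toSet) ∧
  (∀ X ∈ F,
    (∀ A ∈ zfFrestrict F X, ∀ B ∈ zfFrestrict F X,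
        ∃ C ∈ zfFrestrict F X, A.toSet ∪ B.toSet ⊆ C.toSet) ∨
    ∃ X₁ ∈ F, ∃ X₂ ∈ F, rk X₁ = rk X₂ ∧ zfOtimes om2 X X₁ X₂ ∧
      zfFrestrict F X = zfFrestrict F X₁ ∪ zfFrestrict F X₂ ∪ {X₁, X₂}) ∧
  (∀ x : ZFSet, x ∈ lam ↔ ∃ X ∈ F, x ∈ X)

/-! The rank function of `F` is first-order definable from `F`: its graph `{⟨Z, rk Z⟩ : Z ∈ F}` is
a set, characterised among all sets by the rank recursion, which is unique by well-foundedness.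
Hence `M` contains `rk Y` for every `Y ∈ F ∩ M` and, for every `α ∈ M ∩ ω₁`, some `X ∈ F ∩ M` of
rank `α`. Since `ω ⊆ M`, countable members of `M` are subsets of `M`; so such an `X` is contained
in `M ∩ λ`, and properly, because `M ∩ λ ∉ M` (otherwise, `λ` being uncountable, elementarity
would give a member of `F ∩ M` not contained in `M ∩ λ`). Conversely, every element of
`rank(M ∩ λ)` lies in or equals `rk Y` for some `Y ⊊ M ∩ λ`, and such `Y` lie in `M`. -/

open FirstOrder.Language Function

universe u

namespace FirstOrder.Language.Formula

variable {L : Language} {S : Type*} [L.Structure S]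

noncomputable def forallVar (s : ℕ) (φ : L.Formula ℕ) : L.Formula ℕ :=
  (φ.relabel fun t => if t = s then Sum.inr () else Sum.inl t).iAlls Unit

noncomputable def existsVar (s : ℕ) (φ : L.Formula ℕ) : L.Formula ℕ :=
  ∼(forallVar s ∼φ)

@[simp] theorem realize_forallVar {s : ℕ} {φ : L.Formula ℕ} {v : ℕ → S} :
    (forallVar s φ).Realize v ↔ ∀ z : S, φ.Realize (update v s z) := by
  have hv (i : Unit → S) :
      (fun t => Sum.elim v i (if t = s then Sum.inr () else Sum.inl t)) = update v s (i ()) := by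
    funext t
    by_cases ht : t = s <;> simp [ht]
  simp only [forallVar, realize_iAlls, realize_relabel, Function.comp_def, hv]
  exact ⟨fun h z => h fun _ => z, fun h i => h _⟩

@[simp] theorem realize_existsVar {s : ℕ} {φ : L.Formula ℕ} {v : ℕ → S} :
    (existsVar s φ).Realize v ↔ ∃ z : S, φ.Realize (update v s z) := by
  simp [existsVar]

end FirstOrder.Language.Formula

namespace FirstOrder.Language.ElementarySubstructure

variable {L : Language} {S : Type*} [L.Structure S]

theorem exists_mem_realize_update (M : L.ElementarySubstructure S) {φ : L.Formula ℕ}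
    {v : ℕ → S} (hv : ∀ i, v i ∈ M) {s : ℕ} (h : ∃ x, φ.Realize (update v s x)) :
    ∃ x ∈ M, φ.Realize (update v s x) := by
  classical
  let w : ℕ → M := fun i => ⟨v i, hv i⟩
  have hw : M.subtype ∘ w = v := rfl
  obtain ⟨x, hx⟩ : ∃ x : M, φ.Realize (update w s x) := by
    rw [← Formula.realize_existsVar, ← M.subtype.map_formula, hw, Formula.realize_existsVar]
    exact h
  refine ⟨x, x.2, ?_⟩
  rwa [← M.subtype.map_formula, comp_update, hw] at hx

theorem mem_of_forall_realize_update_iff (M : L.ElementarySubstructure S) {φ : L.Formula ℕ}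
    {v : ℕ → S} (hv : ∀ i, v i ∈ M) {s : ℕ} {x : S}
    (h : ∀ y, φ.Realize (update v s y) ↔ y = x) : x ∈ M := by
  obtain ⟨y, hyM, hy⟩ := M.exists_mem_realize_update hv ⟨x, (h x).2 rfl⟩
  rwa [(h y).1 hy] at hyM

end FirstOrder.Language.ElementarySubstructure

namespace ZFSet

@[simp] theorem mem_toSet {a x : ZFSet} : a ∈ x.toSet ↔ a ∈ x := Iff.rfl

theorem eq_insert_self_iff {s x : ZFSet} : s = insert x x ↔ ∀ t, t ∈ s ↔ t ∈ x ∨ t = x := by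
  simp [ZFSet.ext_iff, or_comm]

theorem toSet_injective : Function.Injective ZFSet.toSet := SetLike.coe_injective

end ZFSet

def IsInductive (w : ZFSet) : Prop := ∅ ∈ w ∧ ∀ x ∈ w, insert x x ∈ w

/-- `n ∈ ω` is expressed as membership in every inductive set, which is first-order. -/
def IsNatEnumeration (f X : ZFSet) : Prop :=
  (∀ n y, ZFSet.pair n y ∈ f → ∀ w, IsInductive w → n ∈ w) ∧
  (∀ n y y', ZFSet.pair n y ∈ f → ZFSet.pair n y' ∈ f → y = y') ∧
  ∀ y ∈ X, ∃ n, ZFSet.pair n y ∈ f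

theorem IsInductive.natCast_toZFSet_mem {w : ZFSet} (hw : IsInductive w) (n : ℕ) :
    (n : Ordinal).toZFSet ∈ w := by
  induction n with
  | zero => simpa using hw.1
  | succ n ih => simpa [Ordinal.toZFSet_add_one] using hw.2 _ ih

theorem exists_isNatEnumeration {X : ZFSet} (hX : X.toSet.Countable) :
    ∃ f, IsNatEnumeration f X := by
  obtain ⟨g, hg⟩ := Set.countable_iff_exists_subset_range.1 hX
  have hcode : Function.Injective fun n : ℕ => (n : Ordinal).toZFSet :=
    Ordinal.toZFSet_injective.comp Nat.cast_injective
  refine ⟨ZFSet.range fun n : ℕ => ZFSet.pair (n : Ordinal).toZFSet (g n), ?_, ?_, ?_⟩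
  · intro m y hm w hw
    obtain ⟨n, hn⟩ := ZFSet.mem_range.1 hm
    rw [← (ZFSet.pair_inj.1 hn).1]
    exact hw.natCast_toZFSet_mem n
  · intro m y y' hy hy'
    obtain ⟨n, hn⟩ := ZFSet.mem_range.1 hy
    obtain ⟨n', hn'⟩ := ZFSet.mem_range.1 hy'
    obtain ⟨hnm, rfl⟩ := ZFSet.pair_inj.1 hn
    obtain ⟨hnm', rfl⟩ := ZFSet.pair_inj.1 hn'
    rw [hcode (hnm.trans hnm'.symm)]
  · intro y hy
    obtain ⟨n, rfl⟩ := hg hy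
    exact ⟨_, ZFSet.mem_range.2 ⟨n, rfl⟩⟩

def IsRankFunction (F : ZFSet.{u}) (rk : ZFSet.{u} → ZFSet.{u}) : Prop :=
  ∀ X ∈ F, ∀ b, b ∈ rk X ↔ ∃ Y ∈ F, Y.toSet ⊂ X.toSet ∧ (b ∈ rk Y ∨ b = rk Y)

def IsRankGraph (F R : ZFSet) : Prop :=
  (∀ Z ∈ F, ∃ c, ZFSet.pair Z c ∈ R) ∧
  ∀ Z c, ZFSet.pair Z c ∈ R → Z ∈ F ∧
    ∀ t, t ∈ c ↔ ∃ W ∈ F, W.toSet ⊂ Z.toSet ∧ ∃ d, ZFSet.pair W d ∈ R ∧ (t ∈ d ∨ t = d)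

section Rank

variable {F : ZFSet} {rk : ZFSet → ZFSet}

theorem IsRankFunction.isRankGraph_range (hrk : IsRankFunction F rk) :
    IsRankGraph F (ZFSet.range fun Z : F => ZFSet.pair Z (rk Z)) := by
  have hmem (W d : ZFSet) :
      ZFSet.pair W d ∈ ZFSet.range (fun Z : F => ZFSet.pair Z (rk Z)) ↔ W ∈ F ∧ d = rk W := by
    simp [ZFSet.pair_inj, eq_comm]
  refine ⟨fun Z hZ => ⟨rk Z, (hmem Z _).2 ⟨hZ, rfl⟩⟩, fun Z c hZc => ?_⟩
  obtain ⟨hZ, rfl⟩ := (hmem Z c).1 hZc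
  refine ⟨hZ, fun t => ?_⟩
  rw [hrk Z hZ t]
  refine exists_congr fun W =>
    ⟨fun ⟨hW, hWZ, ht⟩ => ⟨hW, hWZ, rk W, (hmem W _).2 ⟨hW, rfl⟩, ht⟩, ?_⟩
  rintro ⟨hW, hWZ, d, hd, ht⟩
  rw [((hmem W d).1 hd).2] at ht
  exact ⟨hW, hWZ, ht⟩

theorem IsRankGraph.pair_mem_iff
    (hwf : WellFounded fun A B : {x // x ∈ F} => A.1.toSet ⊂ B.1.toSet)
    (hrk : IsRankFunction F rk) {R : ZFSet} (hR : IsRankGraph F R) {Z c : ZFSet} :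
    ZFSet.pair Z c ∈ R ↔ Z ∈ F ∧ c = rk Z := by
  have hunique (Z : {x // x ∈ F}) : ∀ c, ZFSet.pair Z.1 c ∈ R → c = rk Z.1 := by
    induction Z using hwf.induction with
    | _ Z ih =>
      intro c hc
      ext t
      rw [(hR.2 _ _ hc).2 t, hrk Z.1 Z.2 t]
      constructor
      · rintro ⟨W, hW, hWZ, d, hd, ht⟩
        exact ⟨W, hW, hWZ, ih ⟨W, hW⟩ hWZ d hd ▸ ht⟩
      · rintro ⟨W, hW, hWZ, ht⟩
        obtain ⟨d, hd⟩ := hR.1 W hW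
        exact ⟨W, hW, hWZ, d, hd, (ih ⟨W, hW⟩ hWZ d hd).symm ▸ ht⟩
  constructor
  · intro h
    have hZ := (hR.2 Z c h).1
    exact ⟨hZ, hunique ⟨Z, hZ⟩ c h⟩
  · rintro ⟨hZ, rfl⟩
    obtain ⟨c, hc⟩ := hR.1 Z hZ
    rwa [hunique ⟨Z, hZ⟩ c hc] at hc

end Rank

namespace SetFormula

open Formula

-- Compound formulas use the variables `14`–`21` as bound variables, so their free variables must
-- be smaller.

def mem (a b : ℕ) : setLang.Formula ℕ :=
  Relations.formula₂ (() : setLang.Relations 2) (Term.var a) (Term.var b)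

def eq (a b : ℕ) : setLang.Formula ℕ :=
  Term.equal (Term.var a) (Term.var b)

@[simp] theorem realize_mem {a b : ℕ} {v : ℕ → ZFSet} : (mem a b).Realize v ↔ v a ∈ v b :=
  Iff.rfl

@[simp] theorem realize_eq {a b : ℕ} {v : ℕ → ZFSet} : (eq a b).Realize v ↔ v a = v b :=
  Iff.rfl

noncomputable def isPair (p a b : ℕ) : setLang.Formula ℕ :=
  forallVar 20 (mem 20 p ⇔
    (forallVar 21 (mem 21 20 ⇔ eq 21 a) ⊔ forallVar 21 (mem 21 20 ⇔ (eq 21 a ⊔ eq 21 b))))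

theorem realize_isPair {p a b : ℕ} (hp : p < 20) (ha : a < 20) (hb : b < 20) {v : ℕ → ZFSet} :
    (isPair p a b).Realize v ↔ v p = ZFSet.pair (v a) (v b) := by
  have : p ≠ 20 ∧ a ≠ 20 ∧ a ≠ 21 ∧ b ≠ 20 ∧ b ≠ 21 := by omega
  have hsingleton (z : ZFSet) : z = {v a} ↔ ∀ w, w ∈ z ↔ w = v a := by
    simp [ZFSet.ext_iff]
  have hdoubleton (z : ZFSet) : z = {v a, v b} ↔ ∀ w, w ∈ z ↔ w = v a ∨ w = v b := by
    simp [ZFSet.ext_iff]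
  simp [isPair, this, ZFSet.ext_iff (x := v p), ZFSet.pair, hsingleton, hdoubleton]

noncomputable def pairMem (f a b : ℕ) : setLang.Formula ℕ :=
  existsVar 19 (mem 19 f ⊓ isPair 19 a b)

@[simp] theorem realize_pairMem {f a b : ℕ} (hf : f < 19) (ha : a < 19) (hb : b < 19)
    {v : ℕ → ZFSet} : (pairMem f a b).Realize v ↔ ZFSet.pair (v a) (v b) ∈ v f := by
  have : f ≠ 19 ∧ a ≠ 19 ∧ b ≠ 19 := by omega
  simp [pairMem, realize_isPair (by omega : 19 < 20) (by omega : a < 20) (by omega : b < 20), this]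

noncomputable def ssubset (a b : ℕ) : setLang.Formula ℕ :=
  forallVar 18 (mem 18 a ⟹ mem 18 b) ⊓ ∼(forallVar 18 (mem 18 b ⟹ mem 18 a))

@[simp] theorem realize_ssubset {a b : ℕ} (ha : a < 18) (hb : b < 18) {v : ℕ → ZFSet} :
    (ssubset a b).Realize v ↔ (v a).toSet ⊂ (v b).toSet := by
  have : a ≠ 18 ∧ b ≠ 18 := by omega
  simp [ssubset, this, ssubset_iff_subset_not_subset, Set.subset_def]

noncomputable def isInductive (w : ℕ) : setLang.Formula ℕ :=
  forallVar 17 (forallVar 16 ∼(mem 16 17) ⟹ mem 17 w) ⊓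
    forallVar 17 (mem 17 w ⟹
      forallVar 16 (forallVar 15 (mem 15 16 ⇔ (mem 15 17 ⊔ eq 15 17)) ⟹ mem 16 w))

@[simp] theorem realize_isInductive {w : ℕ} (hw : w < 15) {v : ℕ → ZFSet} :
    (isInductive w).Realize v ↔ IsInductive (v w) := by
  have : w ≠ 15 ∧ w ≠ 16 ∧ w ≠ 17 := by omega
  simp [isInductive, this, IsInductive, ← ZFSet.eq_empty, ← ZFSet.eq_insert_self_iff]

noncomputable def memOmega (n : ℕ) : setLang.Formula ℕ :=
  forallVar 14 (isInductive 14 ⟹ mem n 14)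

@[simp] theorem realize_memOmega {n : ℕ} (hn : n < 14) {v : ℕ → ZFSet} :
    (memOmega n).Realize v ↔ ∀ w, IsInductive w → v n ∈ w := by
  have : n ≠ 14 := by omega
  simp [memOmega, this]

noncomputable def isNatEnumeration : setLang.Formula ℕ :=
  forallVar 2 (forallVar 3 (pairMem 0 2 3 ⟹ memOmega 2)) ⊓
    forallVar 2 (forallVar 3 (forallVar 4 (pairMem 0 2 3 ⟹ pairMem 0 2 4 ⟹ eq 3 4))) ⊓
    forallVar 3 (mem 3 1 ⟹ existsVar 2 (pairMem 0 2 3))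

@[simp] theorem realize_isNatEnumeration {v : ℕ → ZFSet} :
    isNatEnumeration.Realize v ↔ IsNatEnumeration (v 0) (v 1) := by
  simp [isNatEnumeration, IsNatEnumeration, and_assoc]

noncomputable def isRankGraph : setLang.Formula ℕ :=
  forallVar 2 (mem 2 1 ⟹ existsVar 3 (pairMem 0 2 3)) ⊓
    forallVar 2 (forallVar 3 (pairMem 0 2 3 ⟹ mem 2 1 ⊓
      forallVar 4 (mem 4 3 ⇔ existsVar 5 (mem 5 1 ⊓ (ssubset 5 2 ⊓
        existsVar 6 (pairMem 0 5 6 ⊓ (mem 4 6 ⊔ eq 4 6)))))))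

@[simp] theorem realize_isRankGraph {v : ℕ → ZFSet} :
    isRankGraph.Realize v ↔ IsRankGraph (v 1) (v 0) := by
  simp [isRankGraph, IsRankGraph]

end SetFormula

namespace FirstOrder.Language.ElementarySubstructure

open SetFormula Formula

variable (M : setLang.ElementarySubstructure ZFSet)

theorem empty_mem : (∅ : ZFSet) ∈ M := by
  obtain ⟨a⟩ := (inferInstance : Nonempty M)
  refine M.mem_of_forall_realize_update_iff (φ := forallVar 1 ∼(mem 1 0)) (v := fun _ => a)
    (fun _ => a.2) (s := 0) fun y => ?_
  simp [ZFSet.eq_empty]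

theorem insert_self_mem {x : ZFSet} (hx : x ∈ M) : insert x x ∈ M := by
  refine M.mem_of_forall_realize_update_iff (φ := forallVar 2 (mem 2 0 ⇔ (mem 2 1 ⊔ eq 2 1)))
    (v := fun _ => x) (fun _ => hx) (s := 0) fun y => ?_
  simp [ZFSet.eq_insert_self_iff]

theorem mem_of_forall_isInductive {n : ZFSet} (hn : ∀ w, IsInductive w → n ∈ w) : n ∈ M := by
  have hω : IsInductive (ZFSet.omega.sep (· ∈ M)) := by
    refine ⟨ZFSet.mem_sep.2 ⟨ZFSet.omega_zero, M.empty_mem⟩, fun x hx => ?_⟩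
    obtain ⟨hxω, hxM⟩ := ZFSet.mem_sep.1 hx
    exact ZFSet.mem_sep.2 ⟨ZFSet.omega_succ hxω, M.insert_self_mem hxM⟩
  exact (ZFSet.mem_sep.1 (hn _ hω)).2

theorem exists_mem_pair_mem_right {R a : ZFSet} (hR : R ∈ M) (ha : a ∈ M)
    (h : ∃ b, ZFSet.pair a b ∈ R) : ∃ b ∈ M, ZFSet.pair a b ∈ R := by
  simpa using M.exists_mem_realize_update (φ := pairMem 0 1 2)
    (v := fun i => if i = 0 then R else a) (fun i => by split_ifs <;> assumption) (s := 2)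
    (by simpa using h)

theorem exists_mem_pair_mem_left {R b : ZFSet} (hR : R ∈ M) (hb : b ∈ M)
    (h : ∃ a, ZFSet.pair a b ∈ R) : ∃ a ∈ M, ZFSet.pair a b ∈ R := by
  simpa using M.exists_mem_realize_update (φ := pairMem 0 1 2)
    (v := fun i => if i = 0 then R else b) (fun i => by split_ifs <;> assumption) (s := 1)
    (by simpa using h)

theorem mem_of_mem_of_countable {X x : ZFSet} (hXM : X ∈ M) (hX : X.toSet.Countable)
    (hx : x ∈ X) : x ∈ M := by
  obtain ⟨f, hfM, hf⟩ : ∃ f ∈ M, IsNatEnumeration f X := by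
    simpa using M.exists_mem_realize_update (φ := isNatEnumeration) (v := fun _ => X)
      (fun _ => hXM) (s := 0) (by simpa using exists_isNatEnumeration hX)
  obtain ⟨n, hn⟩ := hf.2.2 x hx
  obtain ⟨y, hyM, hy⟩ := M.exists_mem_pair_mem_right hfM
    (M.mem_of_forall_isInductive (hf.1 n x hn)) ⟨x, hn⟩
  rwa [← hf.2.1 n y x hy hn]

section Rank

variable {F : ZFSet} {rk : ZFSet → ZFSet}
  (hwf : WellFounded fun A B : {x // x ∈ F} => A.1.toSet ⊂ B.1.toSet)
  (hrk : IsRankFunction F rk) (hFM : F ∈ M)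
include hrk hFM

theorem exists_isRankGraph_mem : ∃ R ∈ M, IsRankGraph F R := by
  simpa using M.exists_mem_realize_update (φ := isRankGraph) (v := fun _ => F) (fun _ => hFM)
    (s := 0) (by simpa using ⟨_, hrk.isRankGraph_range⟩)

include hwf

theorem rk_mem {Y : ZFSet} (hY : Y ∈ F) (hYM : Y ∈ M) : rk Y ∈ M := by
  obtain ⟨R, hRM, hR⟩ := M.exists_isRankGraph_mem hrk hFM
  obtain ⟨c, hcM, hc⟩ :=
    M.exists_mem_pair_mem_right hRM hYM ⟨rk Y, (hR.pair_mem_iff hwf hrk).2 ⟨hY, rfl⟩⟩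
  rwa [((hR.pair_mem_iff hwf hrk).1 hc).2] at hcM

theorem exists_mem_rk_eq {α : ZFSet} (hαM : α ∈ M) (hα : ∃ X ∈ F, rk X = α) :
    ∃ X ∈ M, X ∈ F ∧ rk X = α := by
  obtain ⟨R, hRM, hR⟩ := M.exists_isRankGraph_mem hrk hFM
  obtain ⟨X, hX, rfl⟩ := hα
  obtain ⟨Y, hYM, hY⟩ :=
    M.exists_mem_pair_mem_left hRM hαM ⟨X, (hR.pair_mem_iff hwf hrk).2 ⟨hX, rfl⟩⟩
  obtain ⟨hYF, hXY⟩ := (hR.pair_mem_iff hwf hrk).1 hY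
  exact ⟨Y, hYM, hYF, hXY.symm⟩

end Rank

variable {lam X : ZFSet}

theorem toSet_subset_of_mem {Z : ZFSet} (hZM : Z ∈ M) (hZc : Z.toSet.Countable)
    (hZlam : Z.toSet ⊆ lam.toSet) (hX : X.toSet = {x | x ∈ M ∧ x ∈ lam}) :
    Z.toSet ⊆ X.toSet :=
  fun _ hz => hX ▸ ⟨M.mem_of_mem_of_countable hZM hZc hz, hZlam hz⟩

theorem notMem_of_toSet_eq_inter {F : ZFSet} (hFM : F ∈ M)
    (hF : ∀ Z ∈ F, Z.toSet ⊆ lam.toSet ∧ Z.toSet.Countable)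
    (hunion : ∀ x, x ∈ lam ↔ ∃ Z ∈ F, x ∈ Z) (hlam : ¬ lam.toSet.Countable)
    (hXc : X.toSet.Countable) (hX : X.toSet = {x | x ∈ M ∧ x ∈ lam}) : X ∉ M := by
  intro hXM
  obtain ⟨u, hu, huX⟩ := Set.not_subset.1 fun h => hlam (hXc.mono h)
  obtain ⟨Z, hZ, huZ⟩ := (hunion u).1 hu
  obtain ⟨Z, hZM, hZF, z, hzZ, hzX⟩ : ∃ Z ∈ M, Z ∈ F ∧ ∃ z ∈ Z, z ∉ X := by
    simpa using M.exists_mem_realize_update (φ := mem 0 1 ⊓ existsVar 3 (mem 3 0 ⊓ ∼(mem 3 2)))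
      (v := fun i => if i = 1 then F else X) (fun i => by split_ifs <;> assumption) (s := 0)
      (by simpa using ⟨Z, hZ, u, huZ, huX⟩)
  exact hzX (M.toSet_subset_of_mem hZM (hF Z hZF).2 (hF Z hZF).1 hX hzZ)

end FirstOrder.Language.ElementarySubstructure

theorem stmt9_general (lam om1 om2 : ZFSet)
    (hom1 : ZFIsOrd om1 ∧ ¬ om1.toSet.Countable ∧ ∀ y ∈ om1, y.toSet.Countable)
    (hom1lam : om1.toSet ⊆ lam.toSet)
    (F : ZFSet) (rk : ZFSet → ZFSet)
    (hsm : zfIsStrongSemimorass lam om2 F rk)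
    (hrkctble : ∀ X ∈ F, ZFIsOrd (rk X) ∧ rk X ∈ om1)
    (hreal : ∀ α ∈ om1, ∃ X ∈ F, rk X = α)
    (M : setLang.ElementarySubstructure ZFSet)
    (hFM : F ∈ M)
    (Xlam : ZFSet) (hXlam : Xlam.toSet = {x | x ∈ M ∧ x ∈ lam}) (hXlamF : Xlam ∈ F)
    (hMclosed : ∀ X ∈ F, X.toSet ⊂ Xlam.toSet → X ∈ M) :
    ∀ α : ZFSet, α ∈ rk Xlam ↔ (α ∈ M ∧ α ∈ om1) := by
  obtain ⟨hFsub, hwf, hrk, -, -, -, -, hunion⟩ := hsm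
  have hF (Z) (hZ : Z ∈ F) : Z.toSet ⊆ lam.toSet ∧ Z.toSet.Countable :=
    ⟨(hFsub Z hZ).1, (hFsub Z hZ).2.1⟩
  have hXlamM : Xlam ∉ M := M.notMem_of_toSet_eq_inter hFM hF hunion
    (fun h => hom1.2.1 (h.mono hom1lam)) (hF Xlam hXlamF).2 hXlam
  intro α
  rw [hrk Xlam hXlamF α]
  constructor
  · rintro ⟨Y, hY, hYXlam, hαY⟩
    have hrkYM := M.rk_mem hwf hrk hFM hY (hMclosed Y hY hYXlam)
    have hrkY := (hrkctble Y hY).2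
    rcases hαY with hαY | rfl
    · exact ⟨M.mem_of_mem_of_countable hrkYM (hom1.2.2 _ hrkY) hαY, hom1.1.1.mem_trans hαY hrkY⟩
    · exact ⟨hrkYM, hrkY⟩
  · rintro ⟨hαM, hα⟩
    obtain ⟨X, hXM, hX, rfl⟩ := M.exists_mem_rk_eq hwf hrk hFM hαM (hreal α hα)
    have hXXlam := M.toSet_subset_of_mem hXM (hF X hX).2 (hF X hX).1 hXlam
    refine ⟨X, hX, hXXlam.ssubset_of_ne fun h => hXlamM ?_, Or.inr rfl⟩
    exact ZFSet.toSet_injective h ▸ hXM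

/-- Let `F` be a strong `(ω₁,λ)`-semimorass (with ranks countable ordinals, every
countable ordinal being realized as a rank) and `M` a countable elementary submodel
(of the ZF universe, standing for `H(θ)`) with `F ∈ M`, `Xλ = M ∩ λ ∈ F`, and such
that every `X ∈ F` with `X ⊊ M ∩ λ` belongs to `M`.  Then
`rank(M ∩ λ) = M ∩ ω₁`, i.e. `rk Xλ = {α ∈ ω₁ : α ∈ M}` as sets. -/
theorem stmt9 (lam om1 om2 : ZFSet) (hlam : ZFIsOrd lam)
    (hom1 : ZFIsOrd om1 ∧ ¬ om1.toSet.Countable ∧ ∀ y ∈ om1, y.toSet.Countable)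
    (hom2 : ZFIsOrd om2 ∧ om1 ∈ om2 ∧
      (∀ y ∈ om2, ∃ f : y.toSet → om1.toSet, Function.Injective f) ∧
      ¬ ∃ f : om2.toSet → om1.toSet, Function.Injective f)
    (hom1lam : om1.toSet ⊆ lam.toSet)
    (F : ZFSet) (rk : ZFSet → ZFSet)
    (hsm : zfIsStrongSemimorass lam om2 F rk)
    (hrkctble : ∀ X ∈ F, ZFIsOrd (rk X) ∧ rk X ∈ om1)
    (hreal : ∀ α ∈ om1, ∃ X ∈ F, rk X = α)
    (M : setLang.ElementarySubstructure ZFSet)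
    (hMcnt : (M : Set ZFSet).Countable)
    (hFM : F ∈ M)
    (Xlam : ZFSet) (hXlam : Xlam.toSet = {x | x ∈ M ∧ x ∈ lam}) (hXlamF : Xlam ∈ F)
    (hMclosed : ∀ X ∈ F, X.toSet ⊂ Xlam.toSet → X ∈ M) :
    ∀ α : ZFSet, α ∈ rk Xlam ↔ (α ∈ M ∧ α ∈ om1) :=
  stmt9_general lam om1 om2 hom1 hom1lam F rk hsm hrkctble hreal M hFM Xlam hXlam hXlamF hMclosed
end

section
/- Let X be a locally compact scattered space with stem Y, with cardinal sequence SEQ(X) = ⟨κ_ν : ν < μ⟩ and SEQ(Y) = ⟨λ_ν : ν < μ⟩. Then for every sequence s = ⟨s(ν) : ν < μ⟩ of cardinals with λ_ν ≤ s(ν) ≤ κ_ν for all ν < μ, there exists a subspace Z with Y ⊆ Z ⊆ X such that SEQ(Z) = s. Conversely, every Z with Y ⊆ Z ⊆ X has SEQ(Z)(ν) between λ_ν and κ_ν for each ν < μ. -/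
open Set Cardinal

universe u

noncomputable section

/-- The derived set of `A`: the set of accumulation points of `A`. -/
def derivSet {X : Type u} [TopologicalSpace X] (A : Set X) : Set X :=
  {x | x ∈ closure (A \ {x})}

/-- The `o`-th Cantor–Bendixson derivative of the space `X`. -/
def CBd (X : Type u) [TopologicalSpace X] : Ordinal.{u} → Set X :=
  WellFounded.fix Ordinal.lt_wf
    (fun o ih => {x | ∀ β, ∀ h : β < o, x ∈ derivSet (ih β h)})

/-- The `o`-th Cantor–Bendixson level `I_o(X)` of the space `X`. -/
def cbLevel (X : Type u) [TopologicalSpace X] (o : Ordinal.{u}) : Set X :=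
  CBd X o \ CBd X (o + 1)

/-- The Cantor–Bendixson height of `X`: the least `o` with `o`-th derivative empty. -/
def cbHeight (X : Type u) [TopologicalSpace X] : Ordinal.{u} :=
  sInf {o | CBd X o = ∅}

/-- The reduced height `ht⁻(X)`: the least `β` such that `I_β(X)` is finite. -/
def htMinus (X : Type u) [TopologicalSpace X] : Ordinal.{u} :=
  sInf {o | (cbLevel X o).Finite}

/-- A space is scattered iff every nonempty subset has a relatively isolated point. -/
def Scattered (X : Type u) [TopologicalSpace X] : Prop :=
  ∀ A : Set X, A.Nonempty → ∃ x ∈ A, ∃ U : Set X, IsOpen U ∧ U ∩ A = {x}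

/-- `Y` is a stem of `X`: `ht(Y) = ht(X)` and `X \ Y` is closed discrete in `X`. -/
def IsStem {X : Type u} [TopologicalSpace X] (Y : Set X) : Prop :=
  cbHeight ↥Y = cbHeight X ∧ IsClosed Yᶜ ∧ DiscreteTopology ↥(Yᶜ)

section Aux

variable {X : Type u} [TopologicalSpace X]

lemma cbd_def (o : Ordinal.{u}) :
    CBd X o = {x | ∀ β, β < o → x ∈ derivSet (CBd X β)} := by
  show WellFounded.fix Ordinal.lt_wf _ o = _
  rw [WellFounded.fix_eq]
  rfl

lemma cbd_antitone {o₁ o₂ : Ordinal.{u}} (h : o₁ ≤ o₂) : CBd X o₂ ⊆ CBd X o₁ := by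
  intro x hx
  rw [cbd_def] at hx ⊢
  exact fun β hβ => hx β (hβ.trans_le h)

lemma cbLevel_disjoint_of_lt {ν ν' : Ordinal.{u}} (h : ν < ν') :
    cbLevel X ν ∩ cbLevel X ν' = ∅ := by
  ext x
  simp only [mem_inter_iff, mem_empty_iff_false, iff_false, not_and]
  intro hx hx'
  have h1 : ν + 1 ≤ ν' := by
    rw [Ordinal.add_one_eq_succ]; exact Order.succ_le_of_lt h
  exact hx.2 (cbd_antitone h1 hx'.1)

lemma cbLevel_disjoint {ν ν' : Ordinal.{u}} (h : ν ≠ ν') :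
    cbLevel X ν ∩ cbLevel X ν' = ∅ := by
  rcases h.lt_or_gt with h' | h'
  · exact cbLevel_disjoint_of_lt h'
  · rw [inter_comm]; exact cbLevel_disjoint_of_lt h'

/-- The key closure trick: accumulation from `B` at a point of `Z` can be realized
inside `Z ∩ B`, provided `Y ⊆ Z`, `Y` open and every point of `Yᶜ` relatively isolated. -/
lemma closure_inter_trick {Y Z : Set X} (hYopen : IsOpen Y)
    (hiso : ∀ x ∈ Yᶜ, ∃ U : Set X, IsOpen U ∧ U ∩ Yᶜ = {x}) (hYZ : Y ⊆ Z)
    (B : Set X) {x : X} (hx : x ∈ Z) :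
    x ∈ closure ((Z ∩ B) \ {x}) ↔ x ∈ closure (B \ {x}) := by
  constructor
  · exact fun h => closure_mono (diff_subset_diff_left inter_subset_right) h
  · intro h
    rw [mem_closure_iff] at h ⊢
    intro V hV hxV
    by_cases hxY : x ∈ Y
    · obtain ⟨y, hy1, hy2⟩ := h (V ∩ Y) (hV.inter hYopen) ⟨hxV, hxY⟩
      exact ⟨y, hy1.1, ⟨hYZ hy1.2, hy2.1⟩, hy2.2⟩
    · obtain ⟨U, hU, hUY⟩ := hiso x hxY
      have hxU : x ∈ U := by
        have : x ∈ U ∩ Yᶜ := by rw [hUY]; rfl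
        exact this.1
      obtain ⟨y, hy1, hy2⟩ := h (V ∩ U) (hV.inter hU) ⟨hxV, hxU⟩
      have hyY : y ∈ Y := by
        by_contra hc
        have : y ∈ U ∩ Yᶜ := ⟨hy1.2, hc⟩
        rw [hUY] at this
        exact hy2.2 this
      exact ⟨y, hy1.1, ⟨hYZ hyY, hy2.1⟩, hy2.2⟩

lemma derivSet_subtype {Z : Set X} (B : Set X) (x : ↥Z) :
    x ∈ derivSet ((Subtype.val ⁻¹' B : Set ↥Z)) ↔
      (x : X) ∈ closure ((Z ∩ B) \ {(x : X)}) := by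
  show x ∈ closure _ ↔ _
  rw [closure_subtype]
  have : (Subtype.val '' (((Subtype.val ⁻¹' B : Set ↥Z)) \ {x})) = (Z ∩ B) \ {(x : X)} := by
    rw [Set.image_diff Subtype.coe_injective, Set.image_singleton,
      Subtype.image_preimage_coe]
  rw [this]

lemma cbd_subtype {Y Z : Set X} (hYopen : IsOpen Y)
    (hiso : ∀ x ∈ Yᶜ, ∃ U : Set X, IsOpen U ∧ U ∩ Yᶜ = {x}) (hYZ : Y ⊆ Z)
    (o : Ordinal.{u}) :
    CBd (↥Z) o = Subtype.val ⁻¹' (CBd X o) := by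
  induction o using Ordinal.induction with
  | h o IH =>
    ext x
    rw [cbd_def, mem_setOf_eq, mem_preimage, cbd_def, mem_setOf_eq]
    refine forall_congr' fun β => forall_congr' fun hβ => ?_
    rw [IH β hβ, derivSet_subtype]
    show _ ↔ (x : X) ∈ closure _
    rw [closure_inter_trick hYopen hiso hYZ _ x.2]

lemma cbLevel_subtype {Y Z : Set X} (hYopen : IsOpen Y)
    (hiso : ∀ x ∈ Yᶜ, ∃ U : Set X, IsOpen U ∧ U ∩ Yᶜ = {x}) (hYZ : Y ⊆ Z)
    (ν : Ordinal.{u}) :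
    cbLevel (↥Z) ν = Subtype.val ⁻¹' (cbLevel X ν) := by
  rw [cbLevel, cbLevel, cbd_subtype hYopen hiso hYZ, cbd_subtype hYopen hiso hYZ,
    preimage_diff]

lemma mk_cbLevel_subtype {Y Z : Set X} (hYopen : IsOpen Y)
    (hiso : ∀ x ∈ Yᶜ, ∃ U : Set X, IsOpen U ∧ U ∩ Yᶜ = {x}) (hYZ : Y ⊆ Z)
    (ν : Ordinal.{u}) :
    #(cbLevel (↥Z) ν) = #((Z ∩ cbLevel X ν : Set X)) := by
  rw [cbLevel_subtype hYopen hiso hYZ, ← Subtype.image_preimage_coe,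
    Cardinal.mk_image_eq Subtype.coe_injective]

lemma exists_set_between {A B : Set X} (hAB : A ⊆ B) {c : Cardinal.{u}}
    (hc : ℵ₀ ≤ c) (h1 : #A ≤ c) (h2 : c ≤ #B) :
    ∃ S : Set X, A ⊆ S ∧ S ⊆ B ∧ #S = c := by
  by_cases h : c ≤ #(B \ A : Set X)
  · obtain ⟨T, hT, hTc⟩ := Cardinal.le_mk_iff_exists_subset.mp h
    refine ⟨A ∪ T, subset_union_left, union_subset hAB (hT.trans diff_subset),
      le_antisymm ?_ ?_⟩
    · calc #((A ∪ T : Set X)) ≤ #A + #T := mk_union_le _ _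
        _ ≤ c + c := add_le_add h1 hTc.le
        _ = c := Cardinal.add_eq_self hc
    · rw [← hTc]
      exact mk_le_mk_of_subset subset_union_right
  · refine ⟨B, hAB, subset_rfl, le_antisymm ?_ h2⟩
    have hB : B ⊆ A ∪ (B \ A) := fun y hy => by
      by_cases hyA : y ∈ A
      · exact Or.inl hyA
      · exact Or.inr ⟨hy, hyA⟩
    calc #B ≤ #((A ∪ (B \ A) : Set X)) := mk_le_mk_of_subset hB
      _ ≤ #A + #(B \ A : Set X) := mk_union_le _ _
      _ ≤ c + c := add_le_add h1 (le_of_not_ge h)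
      _ = c := Cardinal.add_eq_self hc

end Aux

/-- Let `X` be a locally compact scattered (Hausdorff) space with stem `Y`, where
`SEQ(X) = ⟨κ_ν : ν < μ⟩` and `SEQ(Y) = ⟨λ_ν : ν < μ⟩` (`μ = ht⁻(X) = ht⁻(Y)`,
`κ_ν = |I_ν(X)|`, `λ_ν = |I_ν(Y)|`).  Then every sequence `s` of cardinals with
`λ_ν ≤ s ν ≤ κ_ν` for all `ν < μ` is `SEQ(Z)` for some `Z` with `Y ⊆ Z ⊆ X`; and
conversely every `Z` with `Y ⊆ Z ⊆ X` satisfies `λ_ν ≤ |I_ν(Z)| ≤ κ_ν` for all `ν < μ`. -/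
theorem stmt11 {X : Type u} [TopologicalSpace X] [T2Space X] [LocallyCompactSpace X]
    (hsc : Scattered X) (Y : Set X) (hY : IsStem Y)
    (μ : Ordinal.{u}) (hμX : htMinus X = μ) (hμY : htMinus ↥Y = μ) :
    (∀ s : Ordinal.{u} → Cardinal.{u},
      (∀ ν < μ, #(cbLevel ↥Y ν) ≤ s ν ∧ s ν ≤ #(cbLevel X ν)) →
      ∃ Z : Set X, Y ⊆ Z ∧ htMinus ↥Z = μ ∧ ∀ ν < μ, #(cbLevel ↥Z ν) = s ν) ∧
    (∀ Z : Set X, Y ⊆ Z → ∀ ν < μ,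
      #(cbLevel ↥Y ν) ≤ #(cbLevel ↥Z ν) ∧ #(cbLevel ↥Z ν) ≤ #(cbLevel X ν)) := by
  obtain ⟨-, hYcl, hYdisc⟩ := hY
  have hYopen : IsOpen Y := by simpa using hYcl.isOpen_compl
  -- every point of `Yᶜ` is relatively isolated by an open set of `X`
  have hiso : ∀ x ∈ Yᶜ, ∃ U : Set X, IsOpen U ∧ U ∩ Yᶜ = {x} := by
    intro x hx
    have hsing : IsOpen ({⟨x, hx⟩} : Set ↥(Yᶜ)) := isOpen_discrete _
    rw [isOpen_induced_iff] at hsing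
    obtain ⟨U, hU, hUx⟩ := hsing
    refine ⟨U, hU, ?_⟩
    have := congrArg (Set.image (Subtype.val : ↥(Yᶜ) → X)) hUx
    rw [Subtype.image_preimage_coe, Set.image_singleton] at this
    rw [inter_comm, this]
  -- cardinalities of levels of intermediate subspaces
  have hmk : ∀ Z : Set X, Y ⊆ Z → ∀ ν : Ordinal.{u},
      #(cbLevel (↥Z) ν) = #((Z ∩ cbLevel X ν : Set X)) :=
    fun Z hZ ν => mk_cbLevel_subtype hYopen hiso hZ ν
  have hmkY : ∀ ν : Ordinal.{u}, #(cbLevel (↥Y) ν) = #((Y ∩ cbLevel X ν : Set X)) :=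
    hmk Y subset_rfl
  -- second part first
  have part2 : ∀ Z : Set X, Y ⊆ Z → ∀ ν < μ,
      #(cbLevel ↥Y ν) ≤ #(cbLevel ↥Z ν) ∧ #(cbLevel ↥Z ν) ≤ #(cbLevel X ν) := by
    intro Z hZ ν _
    rw [hmkY ν, hmk Z hZ ν]
    exact ⟨mk_le_mk_of_subset (inter_subset_inter_left _ hZ),
      mk_le_mk_of_subset inter_subset_right⟩
  refine ⟨?_, part2⟩
  intro s hs
  -- for `ν < μ`, the level of `Y` is infinite
  have hinf : ∀ ν < μ, ℵ₀ ≤ #(cbLevel (↥Y) ν) := by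
    intro ν hν
    by_contra hfin
    rw [not_le, Cardinal.lt_aleph0_iff_set_finite] at hfin
    have : htMinus ↥Y ≤ ν := csInf_le (OrderBot.bddBelow _) hfin
    rw [hμY] at this
    exact absurd hν (not_lt_of_ge this)
  -- choose intermediate sets
  have hchoice : ∀ ν : Ordinal.{u}, ν < μ →
      ∃ S : Set X, (Y ∩ cbLevel X ν) ⊆ S ∧ S ⊆ cbLevel X ν ∧ #S = s ν := by
    intro ν hν
    refine exists_set_between inter_subset_right ?_ ?_ (hs ν hν).2
    · exact le_trans (hinf ν hν) (hs ν hν).1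
    · rw [← hmkY ν]; exact (hs ν hν).1
  choose S hS1 hS2 hS3 using hchoice
  set Z : Set X := Y ∪ ⋃ (ν : Ordinal.{u}), ⋃ (h : ν < μ), S ν h with hZdef
  have hYZ : Y ⊆ Z := subset_union_left
  -- compute `Z ∩ cbLevel X ν` for `ν < μ`
  have hZlevel : ∀ ν, ∀ h : ν < μ, Z ∩ cbLevel X ν = S ν h := by
    intro ν hν
    apply subset_antisymm
    · rintro x ⟨hxZ, hxL⟩
      rcases hxZ with hxY | hxU
      · exact hS1 ν hν ⟨hxY, hxL⟩
      · simp only [mem_iUnion] at hxU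
        obtain ⟨ν', hν', hx⟩ := hxU
        rcases eq_or_ne ν' ν with rfl | hne
        · exact hx
        · exact absurd (mem_inter (hS2 ν' hν' hx) hxL)
            (by rw [cbLevel_disjoint hne]; exact notMem_empty x)
    · intro x hx
      exact ⟨Or.inr (mem_iUnion.mpr ⟨ν, mem_iUnion.mpr ⟨hν, hx⟩⟩), hS2 ν hν hx⟩
  -- `Z ∩ cbLevel X μ = Y ∩ cbLevel X μ`
  have hZlevelμ : Z ∩ cbLevel X μ = Y ∩ cbLevel X μ := by
    apply subset_antisymm
    · rintro x ⟨hxZ, hxL⟩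
      rcases hxZ with hxY | hxU
      · exact ⟨hxY, hxL⟩
      · simp only [mem_iUnion] at hxU
        obtain ⟨ν', hν', hx⟩ := hxU
        exact absurd (mem_inter (hS2 ν' hν' hx) hxL)
          (by rw [cbLevel_disjoint hν'.ne]; exact notMem_empty x)
    · exact inter_subset_inter_left _ hYZ
  have hmkZ : ∀ ν, ∀ h : ν < μ, #(cbLevel (↥Z) ν) = s ν := by
    intro ν hν
    rw [hmk Z hYZ ν, hZlevel ν hν, hS3 ν hν]
  refine ⟨Z, hYZ, ?_, hmkZ⟩
  -- compute `htMinus ↥Z = μ`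
  -- every `o < μ` has infinite level in `Z`
  have hZinf : ∀ o < μ, ¬ (cbLevel (↥Z) o).Finite := by
    intro o ho hfin
    have h1 : ℵ₀ ≤ #(cbLevel (↥Z) o) := by
      rw [hmkZ o ho]
      exact le_trans (le_trans (hinf o ho) ((hs o ho).1.trans le_rfl)) le_rfl
    rw [← Cardinal.lt_aleph0_iff_set_finite] at hfin
    exact absurd h1 (not_le_of_gt hfin)
  by_cases hne : {o : Ordinal.{u} | (cbLevel (↥Y) o).Finite}.Nonempty
  · -- then `μ` itself belongs to that set
    have hμmem : (cbLevel (↥Y) μ).Finite := by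
      have := csInf_mem hne
      rwa [show sInf {o : Ordinal.{u} | (cbLevel (↥Y) o).Finite} = μ from hμY] at this
    have hμmemZ : (cbLevel (↥Z) μ).Finite := by
      rw [← Cardinal.lt_aleph0_iff_set_finite, hmk Z hYZ μ, hZlevelμ, ← hmkY μ,
        Cardinal.lt_aleph0_iff_set_finite]
      exact hμmem
    apply le_antisymm
    · exact csInf_le (OrderBot.bddBelow _) hμmemZ
    · refine le_csInf ⟨μ, hμmemZ⟩ fun b hb => ?_
      by_contra hlt
      exact hZinf b (lt_of_not_ge hlt) hb
  · -- the set for `Y` is empty; then so is the set for `Z`, and `μ = 0`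
    have hμ0 : μ = 0 := by
      rw [← hμY, htMinus, not_nonempty_iff_eq_empty.mp hne, Ordinal.sInf_empty]
    have hZempty : {o : Ordinal.{u} | (cbLevel (↥Z) o).Finite} = ∅ := by
      rw [eq_empty_iff_forall_notMem]
      intro o ho
      apply hne
      refine ⟨o, ?_⟩
      rw [mem_setOf_eq, ← Cardinal.lt_aleph0_iff_set_finite, hmkY o]
      calc #((Y ∩ cbLevel X o : Set X)) ≤ #((Z ∩ cbLevel X o : Set X)) :=
            mk_le_mk_of_subset (inter_subset_inter_left _ hYZ)
        _ = #(cbLevel (↥Z) o) := (hmk Z hYZ o).symm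
        _ < ℵ₀ := Cardinal.lt_aleph0_iff_set_finite.mpr ho
    rw [htMinus, hZempty, Ordinal.sInf_empty, hμ0]

end
end
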